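/- arXiv:2211.11888 — 5 statements merged into one kernel-verified Lean document; each statement's English description precedes it below -/
import Mathlib

section
/- First-order identifiability of binomial mixtures: let n ≥ 1, let θ₁, …, θ_K ∈ (0,1) be distinct, and suppose 1 ≤ K ≤ (n+1)/2. If real coefficients α₁,…,α_K and β₁,…,β_K satisfy, for all y ∈ {0,1,…,n}, ∑_{i=1}^K α_i f(y; θ_i, n) + ∑_{i=1}^K β_i ∂f/∂θ_i (y; θ_i, n) = 0, where f(y;θ,n) = C(n,y) θ^y (1-θ)^{n-y} is the binomial pmf, then α₁ = β₁ = ⋯ = α_K = β_K = 0. -/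
/-- The Binomial(n, θ) probability mass function. -/
noncomputable def binomPMF (n y : ℕ) (θ : ℝ) : ℝ :=
  (n.choose y : ℝ) * θ ^ y * (1 - θ) ^ (n - y)

/-- The partial derivative of the Binomial(n, θ) pmf with respect to θ. -/
noncomputable def binomPMFDeriv (n y : ℕ) (θ : ℝ) : ℝ :=
  (if 1 ≤ y ∧ y ≤ n then (n : ℝ) * ((n - 1).choose (y - 1) : ℝ)
      * (1 - θ) ^ (n - y) * θ ^ (y - 1) else 0)
    - (if y ≤ n - 1 then (n : ℝ) * ((n - 1).choose y : ℝ)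
      * (1 - θ) ^ (n - 1 - y) * θ ^ y else 0)

/-!
The binomial pmfs `f(·; θ, n)` are the degree-`n` Bernstein polynomials evaluated at `θ`, and
`∂f/∂θ` their derivatives. So the hypothesis says that the linear functional
`q ↦ ∑ᵢ (αᵢ q(θᵢ) + βᵢ q'(θᵢ))` kills the Bernstein basis, hence every polynomial of degree
at most `n`. Testing it on `Qᵢ = ∏_{l ≠ i} (X - θₗ)²`, which vanishes to second order at every
other node, and on `(X - θᵢ) Qᵢ`, of degree `2K - 1 ≤ n`, isolates `αᵢ` and `βᵢ`.
-/

open Polynomial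

theorem binomPMF_eq_eval_bernsteinPolynomial (n y : ℕ) (θ : ℝ) :
    binomPMF n y θ = (bernsteinPolynomial ℝ n y).eval θ := by
  simp [bernsteinPolynomial, binomPMF]

theorem binomPMFDeriv_eq_eval_derivative_bernsteinPolynomial {n y : ℕ} (hy : y ≤ n) (θ : ℝ) :
    binomPMFDeriv n y θ = (derivative (bernsteinPolynomial ℝ n y)).eval θ := by
  rcases y with _ | y
  · rw [bernsteinPolynomial.derivative_zero]
    simp [binomPMFDeriv, bernsteinPolynomial]
  · rw [bernsteinPolynomial.derivative_succ]
    by_cases hyn : y + 1 ≤ n - 1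
    · simp [binomPMFDeriv, bernsteinPolynomial, hy, hyn, Nat.sub_sub, Nat.add_comm 1 y]
      ring
    · have hn : n = y + 1 := by omega
      subst hn
      simp [binomPMFDeriv, bernsteinPolynomial]

section Bernstein

variable {K : Type*} [Field K] [CharZero K]

theorem X_pow_mul_one_sub_X_pow_mem_span_bernsteinPolynomial {n k : ℕ} (hk : k ≤ n) :
    (X : K[X]) ^ k * (1 - X) ^ (n - k) ∈
      Submodule.span K (Set.range fun ν : Fin (n + 1) => bernsteinPolynomial K n ν) := by
  have hb : bernsteinPolynomial K n k ∈
      Submodule.span K (Set.range fun ν : Fin (n + 1) => bernsteinPolynomial K n ν) :=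
    Submodule.subset_span ⟨⟨k, Nat.lt_succ_of_le hk⟩, rfl⟩
  have hchoose : (n.choose k : K) ≠ 0 := Nat.cast_ne_zero.mpr (Nat.choose_pos hk).ne'
  convert Submodule.smul_mem _ (n.choose k : K)⁻¹ hb using 1
  rw [bernsteinPolynomial, ← C_eq_natCast, smul_eq_C_mul, mul_assoc, ← mul_assoc,
    ← C_mul, inv_mul_cancel₀ hchoose, C_1, one_mul]

theorem X_pow_mem_span_bernsteinPolynomial {n j : ℕ} (hj : j ≤ n) :
    (X : K[X]) ^ j ∈
      Submodule.span K (Set.range fun ν : Fin (n + 1) => bernsteinPolynomial K n ν) := by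
  have hexpand : (X : K[X]) ^ j = ∑ m ∈ Finset.range (n - j + 1),
      ((n - j).choose m : K) • (X ^ (j + m) * (1 - X) ^ (n - (j + m))) := by
    calc (X : K[X]) ^ j = X ^ j * (X + (1 - X)) ^ (n - j) := by simp
      _ = _ := by
        rw [add_pow, Finset.mul_sum]
        refine Finset.sum_congr rfl fun m _ => ?_
        rw [Nat.cast_smul_eq_nsmul, nsmul_eq_mul, pow_add, Nat.sub_add_eq]
        ring
  rw [hexpand]
  refine Submodule.sum_mem _ fun m hm => Submodule.smul_mem _ _ ?_
  exact X_pow_mul_one_sub_X_pow_mem_span_bernsteinPolynomial (by simp at hm; omega)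

theorem mem_span_bernsteinPolynomial_of_natDegree_le {n : ℕ} {q : K[X]} (hq : q.natDegree ≤ n) :
    q ∈ Submodule.span K (Set.range fun ν : Fin (n + 1) => bernsteinPolynomial K n ν) := by
  rw [q.as_sum_range' (n + 1) (Nat.lt_succ_of_le hq)]
  refine Submodule.sum_mem _ fun j hj => ?_
  rw [← C_mul_X_pow_eq_monomial, ← smul_eq_C_mul]
  exact Submodule.smul_mem _ _ (X_pow_mem_span_bernsteinPolynomial (by simp at hj; omega))

end Bernstein

theorem LinearMap.map_eq_zero_of_bernsteinPolynomial {K M : Type*} [Field K] [CharZero K]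
    [AddCommGroup M] [Module K M] (L : K[X] →ₗ[K] M) {n : ℕ}
    (hL : ∀ ν ≤ n, L (bernsteinPolynomial K n ν) = 0) {q : K[X]} (hq : q.natDegree ≤ n) :
    L q = 0 := by
  have hspan : Submodule.span K (Set.range fun ν : Fin (n + 1) => bernsteinPolynomial K n ν)
      ≤ LinearMap.ker L :=
    Submodule.span_le.mpr <| by
      rintro _ ⟨ν, rfl⟩
      exact hL ν (Nat.lt_succ_iff.mp ν.isLt)
  exact hspan (mem_span_bernsteinPolynomial_of_natDegree_le hq)

section Jets

variable {ι R : Type*} [Fintype ι] [CommRing R]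

noncomputable def jetFunctional (θ α β : ι → R) : R[X] →ₗ[R] R :=
  ∑ i, (α i • leval (θ i) + β i • (leval (θ i)).comp derivative)

theorem jetFunctional_apply (θ α β : ι → R) (q : R[X]) :
    jetFunctional θ α β q = ∑ i, (α i * q.eval (θ i) + β i * (derivative q).eval (θ i)) := by
  simp [jetFunctional]

theorem jetFunctional_eq_of_sq_dvd {θ α β : ι → R} {p : R[X]} {i : ι}
    (hp : ∀ l ≠ i, (X - C (θ l)) ^ 2 ∣ p) :
    jetFunctional θ α β p = α i * p.eval (θ i) + β i * (derivative p).eval (θ i) := by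
  rw [jetFunctional_apply, Finset.sum_eq_single i (fun l _ hl => ?_) (by simp)]
  have hroot : p.eval (θ l) = 0 :=
    eval_eq_zero_of_dvd_of_eval_eq_zero (dvd_of_mul_left_dvd (pow_two (X - C (θ l)) ▸ hp l hl))
      (by simp)
  have hderiv_root : (derivative p).eval (θ l) = 0 :=
    eval_eq_zero_of_dvd_of_eval_eq_zero
      (by simpa using pow_sub_one_dvd_derivative_of_pow_dvd (hp l hl)) (by simp)
  rw [hroot, hderiv_root, mul_zero, mul_zero, add_zero]

variable [DecidableEq ι]

noncomputable def doubleNodePoly (θ : ι → R) (i : ι) : R[X] :=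
  ∏ l ∈ Finset.univ.erase i, (X - C (θ l)) ^ 2

theorem sq_dvd_doubleNodePoly (θ : ι → R) {i l : ι} (hl : l ≠ i) :
    (X - C (θ l)) ^ 2 ∣ doubleNodePoly θ i :=
  Finset.dvd_prod_of_mem _ (Finset.mem_erase.mpr ⟨hl, Finset.mem_univ l⟩)

theorem natDegree_doubleNodePoly [Nontrivial R] (θ : ι → R) (i : ι) :
    (doubleNodePoly θ i).natDegree = 2 * (Fintype.card ι - 1) := by
  rw [doubleNodePoly, natDegree_prod_of_monic _ _ fun l _ => (monic_X_sub_C (θ l)).pow 2]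
  simp [(monic_X_sub_C _).natDegree_pow, mul_comm]

theorem eval_doubleNodePoly_self_ne_zero [IsDomain R] {θ : ι → R} (hθ : Function.Injective θ)
    (i : ι) : (doubleNodePoly θ i).eval (θ i) ≠ 0 := by
  rw [doubleNodePoly, eval_prod]
  refine Finset.prod_ne_zero_iff.mpr fun l hl => ?_
  simpa [sub_eq_zero] using hθ.ne (Finset.ne_of_mem_erase hl).symm

theorem eq_zero_of_jetFunctional_eq_zero [IsDomain R] {θ α β : ι → R}
    (hθ : Function.Injective θ) {n : ℕ} (hcard : 2 * Fintype.card ι ≤ n + 1)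
    (hL : ∀ q : R[X], q.natDegree ≤ n → jetFunctional θ α β q = 0) (i : ι) :
    α i = 0 ∧ β i = 0 := by
  have hq := eval_doubleNodePoly_self_ne_zero hθ i
  have hdeg : (doubleNodePoly θ i).natDegree + 1 ≤ n := by
    have := Fintype.card_pos_iff.mpr ⟨i⟩
    rw [natDegree_doubleNodePoly]
    omega
  have hβ : β i = 0 := by
    have h := hL ((X - C (θ i)) * doubleNodePoly θ i)
      (natDegree_mul_le.trans (by rw [natDegree_X_sub_C]; omega))
    rw [jetFunctional_eq_of_sq_dvd fun l hl => dvd_mul_of_dvd_right (sq_dvd_doubleNodePoly θ hl) _]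
      at h
    simpa [hq] using h
  have hα : α i = 0 := by
    have h := hL (doubleNodePoly θ i) (by omega)
    rw [jetFunctional_eq_of_sq_dvd fun l hl => sq_dvd_doubleNodePoly θ hl, hβ] at h
    simpa [hq] using h
  exact ⟨hα, hβ⟩

end Jets

theorem jetFunctional_bernsteinPolynomial {ι : Type*} [Fintype ι] (θ α β : ι → ℝ) {n y : ℕ}
    (hy : y ≤ n) :
    jetFunctional θ α β (bernsteinPolynomial ℝ n y) =
      (∑ i, α i * binomPMF n y (θ i)) + ∑ i, β i * binomPMFDeriv n y (θ i) := by
  simp only [jetFunctional_apply, Finset.sum_add_distrib, binomPMF_eq_eval_bernsteinPolynomial,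
    binomPMFDeriv_eq_eval_derivative_bernsteinPolynomial hy]

theorem binomial_mixture_first_order_identifiable_general
    (n K : ℕ) (θ : Fin K → ℝ)
    (hθdist : Function.Injective θ)
    (hK2 : 2 * K ≤ n + 1)
    (α β : Fin K → ℝ)
    (hvanish : ∀ y : ℕ, y ≤ n →
      (∑ i, α i * binomPMF n y (θ i)) + (∑ i, β i * binomPMFDeriv n y (θ i)) = 0) :
    ∀ i, α i = 0 ∧ β i = 0 :=
  eq_zero_of_jetFunctional_eq_zero hθdist (by rwa [Fintype.card_fin]) fun _ hq =>
    (jetFunctional θ α β).map_eq_zero_of_bernsteinPolynomial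
      (fun y hy => (jetFunctional_bernsteinPolynomial θ α β hy).trans (hvanish y hy)) hq

/-- First-order identifiability of binomial mixtures: if `1 ≤ K ≤ (n+1)/2`, the
θᵢ ∈ (0,1) are distinct, and the linear combination of the binomial pmfs and
their θ-derivatives vanishes on {0, …, n}, then all coefficients vanish. -/
theorem binomial_mixture_first_order_identifiable
    (n K : ℕ) (hn : 1 ≤ n) (θ : Fin K → ℝ)
    (hθ01 : ∀ i, θ i ∈ Set.Ioo (0 : ℝ) 1)
    (hθdist : Function.Injective θ)
    (hK1 : 1 ≤ K) (hK2 : 2 * K ≤ n + 1)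
    (α β : Fin K → ℝ)
    (hvanish : ∀ y : ℕ, y ≤ n →
      (∑ i, α i * binomPMF n y (θ i)) + (∑ i, β i * binomPMFDeriv n y (θ i)) = 0) :
    ∀ i, α i = 0 ∧ β i = 0 :=
  binomial_mixture_first_order_identifiable_general n K θ hθdist hK2 α β hvanish
end

section
/- Identifiability of binomial mixtures with bounded number of components: let n ≥ 1 and suppose ∑_{i=1}^K w_i f(y;θ_i,n) = ∑_{j=1}^{K'} w'_j f(y;θ'_j,n) for all y ∈ {0,…,n}, where K, K' ≤ (n+1)/2, the θ_i ∈ (0,1) are distinct, the θ'_j ∈ (0,1) are distinct, all weights are strictly positive and sum to 1 in each mixture. Then K = K' and there is a permutation σ of {1,…,K} with θ'_{σ(i)} = θ_i and w'_{σ(i)} = w_i for all i. -/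
open Finset Function

theorem Finset.eq_zero_of_forall_sum_mul_pow_eq_zero {R : Type*} [CommRing R] [IsDomain R]
    {T : Finset R} {n : ℕ} (hT : #T ≤ n + 1) {c : R → R}
    (h : ∀ y ≤ n, ∑ t ∈ T, c t * t ^ y = 0) : ∀ t ∈ T, c t = 0 := by
  intro t ht
  set e := T.equivFin
  have hv : (fun k => c (e.symm k)) = 0 :=
    Matrix.eq_zero_of_forall_pow_sum_mul_pow_eq_zero (f := fun k => (e.symm k : R))
      (Subtype.val_injective.comp e.symm.injective) fun y => by
        rw [← h y (by omega), ← Finset.sum_coe_sort T]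
        exact e.symm.sum_comp fun s => c s * (s : R) ^ (y : ℕ)
  simpa using congrFun hv (e ⟨t, ht⟩)

theorem Function.Injective.sum_extend_zero_mul {ι α R : Type*} [Fintype ι]
    [NonUnitalNonAssocSemiring R] {x : ι → α} (hx : Injective x) (a : ι → R) (g : α → R)
    {s : Finset α} (hs : ∀ i, x i ∈ s) :
    ∑ t ∈ s, extend x a 0 t * g t = ∑ i, a i * g (x i) := by
  classical
  rw [← Finset.sum_subset (s₁ := univ.image x) (by simpa [subset_iff]),
    sum_image fun i _ j _ h => hx h]
  · simp [hx.extend_apply]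
  · intro t _ ht
    rw [extend_apply' _ _ _ (by simpa using ht), Pi.zero_apply, zero_mul]

theorem extend_eq_of_sum_mul_pow_eq {ι ι' R : Type*} [Fintype ι] [Fintype ι'] [CommRing R]
    [IsDomain R] {n : ℕ} {x : ι → R} {x' : ι' → R} (hx : Injective x) (hx' : Injective x')
    (hcard : Fintype.card ι + Fintype.card ι' ≤ n + 1) (a : ι → R) (a' : ι' → R)
    (h : ∀ y ≤ n, ∑ i, a i * x i ^ y = ∑ j, a' j * x' j ^ y) :
    extend x a 0 = extend x' a' 0 := by
  classical
  set T := univ.image x ∪ univ.image x'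
  have hT : #T ≤ n + 1 := (card_union_le _ _).trans <|
    (add_le_add card_image_le card_image_le).trans (by simpa using hcard)
  have hxT : ∀ i, x i ∈ T := fun i => mem_union_left _ (mem_image_of_mem x (mem_univ i))
  have hx'T : ∀ j, x' j ∈ T := fun j => mem_union_right _ (mem_image_of_mem x' (mem_univ j))
  have hdiff := eq_zero_of_forall_sum_mul_pow_eq_zero hT (c := extend x a 0 - extend x' a' 0)
    fun y hy => by
      simp only [Pi.sub_apply, sub_mul, sum_sub_distrib, hx.sum_extend_zero_mul a _ hxT,
        hx'.sum_extend_zero_mul a' _ hx'T, h y hy, sub_self]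
  funext t
  by_cases ht : t ∈ T
  · exact sub_eq_zero.mp (hdiff t ht)
  · rw [extend_apply' _ _ _ fun ⟨i, hi⟩ => ht (hi ▸ hxT i),
      extend_apply' _ _ _ fun ⟨j, hj⟩ => ht (hj ▸ hx'T j)]

theorem exists_equiv_of_extend_eq {ι ι' α M : Type*} [Zero M] {x : ι → α} {x' : ι' → α}
    {a : ι → M} {a' : ι' → M} (hx : Injective x) (hx' : Injective x') (ha : ∀ i, a i ≠ 0)
    (ha' : ∀ j, a' j ≠ 0) (h : extend x a 0 = extend x' a' 0) :
    ∃ e : ι ≃ ι', ∀ i, x' (e i) = x i ∧ a' (e i) = a i := by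
  have hrange : Set.range x = Set.range x' := by
    have := congrArg support h
    rwa [support_extend_zero hx, support_extend_zero hx', support_eq_univ ha,
      support_eq_univ ha', Set.image_univ, Set.image_univ] at this
  let e := (Equiv.ofInjective x hx).trans
    ((Equiv.setCongr hrange).trans (Equiv.ofInjective x' hx').symm)
  have hxe : ∀ i, x' (e i) = x i := fun i => Equiv.apply_ofInjective_symm hx' _
  refine ⟨e, fun i => ⟨hxe i, ?_⟩⟩
  calc a' (e i) = extend x' a' 0 (x' (e i)) := (hx'.extend_apply _ _ _).symm
    _ = a i := by rw [hxe, ← h, hx.extend_apply]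

theorem div_one_sub_injOn {K : Type*} [Field K] :
    Set.InjOn (fun θ : K => θ / (1 - θ)) {θ | θ ≠ 1} := by
  intro s hs t ht h
  rw [div_eq_div_iff (sub_ne_zero.2 (Ne.symm hs)) (sub_ne_zero.2 (Ne.symm ht))] at h
  linear_combination h

theorem binomPMF_eq_choose_mul_odds_pow {n y : ℕ} (hy : y ≤ n) {θ : ℝ} (hθ : θ ≠ 1) :
    binomPMF n y θ = n.choose y * ((1 - θ) ^ n * (θ / (1 - θ)) ^ y) := by
  have : 1 - θ ≠ 0 := sub_ne_zero.2 (Ne.symm hθ)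
  rw [binomPMF, div_pow, ← Nat.sub_add_cancel hy, pow_add, Nat.add_sub_cancel]
  field_simp

theorem sum_mul_binomPMF {ι : Type*} [Fintype ι] {n y : ℕ} (hy : y ≤ n) (w θ : ι → ℝ)
    (hθ : ∀ i, θ i ≠ 1) :
    ∑ i, w i * binomPMF n y (θ i) =
      n.choose y * ∑ i, w i * (1 - θ i) ^ n * (θ i / (1 - θ i)) ^ y := by
  simp only [binomPMF_eq_choose_mul_odds_pow hy (hθ _), mul_sum]
  exact sum_congr rfl fun i _ => by ring

theorem binomial_mixture_identifiable_general
    (n : ℕ) (K K' : ℕ)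
    (hK : 2 * K ≤ n + 1) (hK' : 2 * K' ≤ n + 1)
    (w : Fin K → ℝ) (θ : Fin K → ℝ) (w' : Fin K' → ℝ) (θ' : Fin K' → ℝ)
    (hθ01 : ∀ i, θ i ∈ Set.Ioo (0 : ℝ) 1) (hθ'01 : ∀ j, θ' j ∈ Set.Ioo (0 : ℝ) 1)
    (hθdist : Function.Injective θ) (hθ'dist : Function.Injective θ')
    (hwpos : ∀ i, 0 < w i) (hw'pos : ∀ j, 0 < w' j)
    (heq : ∀ y : ℕ, y ≤ n →
      ∑ i, w i * binomPMF n y (θ i) = ∑ j, w' j * binomPMF n y (θ' j)) :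
    K = K' ∧ ∃ σ : Fin K → Fin K', Function.Bijective σ ∧
      ∀ i, θ' (σ i) = θ i ∧ w' (σ i) = w i := by
  have hθ1 : ∀ i, θ i ≠ 1 := fun i => (hθ01 i).2.ne
  have hθ'1 : ∀ j, θ' j ≠ 1 := fun j => (hθ'01 j).2.ne
  have hodds := div_one_sub_injOn (K := ℝ)
  have hx : Injective fun i => θ i / (1 - θ i) := fun i j h => hθdist (hodds (hθ1 i) (hθ1 j) h)
  have hx' : Injective fun j => θ' j / (1 - θ' j) := fun i j h =>
    hθ'dist (hodds (hθ'1 i) (hθ'1 j) h)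
  have hmeasures := extend_eq_of_sum_mul_pow_eq (n := n) hx hx'
    (by simp only [Fintype.card_fin]; omega)
    (fun i => w i * (1 - θ i) ^ n) (fun j => w' j * (1 - θ' j) ^ n) fun y hy =>
      mul_left_cancel₀ (Nat.cast_ne_zero.2 (Nat.choose_pos hy).ne') <| by
        rw [← sum_mul_binomPMF hy _ _ hθ1, ← sum_mul_binomPMF hy _ _ hθ'1, heq y hy]
  obtain ⟨e, he⟩ := exists_equiv_of_extend_eq hx hx'
    (fun i => mul_ne_zero (hwpos i).ne' (pow_ne_zero _ (sub_ne_zero.2 (hθ1 i).symm)))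
    (fun j => mul_ne_zero (hw'pos j).ne' (pow_ne_zero _ (sub_ne_zero.2 (hθ'1 j).symm)))
    hmeasures
  have hθe : ∀ i, θ' (e i) = θ i := fun i => hodds (hθ'1 _) (hθ1 i) (he i).1
  refine ⟨Fin.equiv_iff_eq.mp ⟨e⟩, e, e.bijective, fun i => ⟨hθe i, ?_⟩⟩
  have hw := (he i).2
  simp only [hθe] at hw
  exact mul_right_cancel₀ (pow_ne_zero _ (sub_ne_zero.2 (hθ1 i).symm)) hw

/-- Identifiability of binomial mixtures with the number of components bounded
by `(n+1)/2`: equal mixtures have the same number of components and the same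
atoms and weights up to a permutation. -/
theorem binomial_mixture_identifiable
    (n : ℕ) (hn : 1 ≤ n) (K K' : ℕ)
    (hK : 2 * K ≤ n + 1) (hK' : 2 * K' ≤ n + 1)
    (w : Fin K → ℝ) (θ : Fin K → ℝ) (w' : Fin K' → ℝ) (θ' : Fin K' → ℝ)
    (hθ01 : ∀ i, θ i ∈ Set.Ioo (0 : ℝ) 1) (hθ'01 : ∀ j, θ' j ∈ Set.Ioo (0 : ℝ) 1)
    (hθdist : Function.Injective θ) (hθ'dist : Function.Injective θ')
    (hwpos : ∀ i, 0 < w i) (hw'pos : ∀ j, 0 < w' j)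
    (hwsum : ∑ i, w i = 1) (hw'sum : ∑ j, w' j = 1)
    (heq : ∀ y : ℕ, y ≤ n →
      ∑ i, w i * binomPMF n y (θ i) = ∑ j, w' j * binomPMF n y (θ' j)) :
    K = K' ∧ ∃ σ : Fin K → Fin K', Function.Bijective σ ∧
      ∀ i, θ' (σ i) = θ i ∧ w' (σ i) = w i :=
  binomial_mixture_identifiable_general n K K' hK hK' w θ w' θ' hθ01 hθ'01 hθdist hθ'dist hwpos
    hw'pos heq
end

section
/- If polynomials in e^t vanish identically, coefficients vanish: suppose θ₁,…,θ_K ∈ (0,1) are distinct and α_i, β_i ∈ ℝ satisfy ∑_{i=1}^K [α_i (1−θ_i+θ_i e^t)^n + β_i n (e^t−1)(1−θ_i+θ_i e^t)^{n−1}] = 0 for all t ∈ ℝ, with n ≥ 2K − 1. Then all α_i = β_i = 0. -/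
/-!
Substituting `w = eᵗ - 1`, the hypothesis says that the polynomial
`∑ᵢ αᵢ (1 + θᵢ w)ⁿ + βᵢ n w (1 + θᵢ w)ⁿ⁻¹` vanishes on `(-1, ∞)`, hence identically. As
`∂/∂θ (1 + θ w)ⁿ = n w (1 + θ w)ⁿ⁻¹`, its coefficient of `wᵏ` is `C(n, k) L(Xᵏ)` for the functional
`L p = ∑ᵢ αᵢ p(θᵢ) + βᵢ p'(θᵢ)`. So `L` kills every polynomial of degree at most `n`, in particular
the Hermite interpolation polynomials `(X - θⱼ) ℓⱼ²` and `ℓⱼ²` (`ℓⱼ` the Lagrange basis, of degree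
`K - 1`), and these give `βⱼ = 0` and then `αⱼ = 0`.
-/

open Polynomial Finset

namespace Polynomial

section CommRing

variable {R : Type*} [CommRing R]

theorem coeff_one_add_C_mul_X_pow (a : R) (n k : ℕ) :
    ((1 + C a * X) ^ n).coeff k = n.choose k * a ^ k := by
  rw [show (1 + C a * X) ^ n = ((1 + X) ^ n).comp (C a * X) by simp, comp_C_mul_X_coeff,
    coeff_one_add_X_pow]

theorem coeff_C_mul_X_mul_one_add_C_mul_X_pow (a : R) (n k : ℕ) :
    (C (n : R) * X * (1 + C a * X) ^ (n - 1)).coeff k = n.choose k * (k * a ^ (k - 1)) := by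
  rcases k with _ | k
  · simp
  rw [mul_assoc, coeff_C_mul, coeff_X_mul, coeff_one_add_C_mul_X_pow, Nat.add_sub_cancel]
  rcases n with _ | n
  · simp
  rw [Nat.add_sub_cancel, ← mul_assoc, ← mul_assoc, ← Nat.cast_mul, ← Nat.cast_mul, Nat.add_one_mul_choose_eq]

theorem map_eq_zero_of_natDegree_le {M : Type*} [AddCommMonoid M] [Module R M]
    (L : R[X] →ₗ[R] M) {n : ℕ} (hL : ∀ k ≤ n, L (X ^ k) = 0) {p : R[X]}
    (hp : p.natDegree ≤ n) : L p = 0 := by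
  rw [p.as_sum_range_C_mul_X_pow' (Nat.lt_succ_of_le hp), map_sum]
  refine sum_eq_zero fun k hk => ?_
  rw [← smul_eq_C_mul, map_smul, hL k (Nat.lt_succ_iff.mp (mem_range.mp hk)), smul_zero]

variable {ι : Type*} [Fintype ι]

noncomputable def hermiteFunctional (θ α β : ι → R) : R[X] →ₗ[R] R :=
  ∑ i, (α i • leval (θ i) + β i • leval (θ i) ∘ₗ derivative)

theorem hermiteFunctional_apply (θ α β : ι → R) (p : R[X]) :
    hermiteFunctional θ α β p = ∑ i, (α i * p.eval (θ i) + β i * (derivative p).eval (θ i)) := by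
  simp [hermiteFunctional]

noncomputable def binomialSum (n : ℕ) (θ α β : ι → R) : R[X] :=
  ∑ i, (C (α i) * (1 + C (θ i) * X) ^ n + C (β i) * (C (n : R) * X * (1 + C (θ i) * X) ^ (n - 1)))

theorem eval_binomialSum (n : ℕ) (θ α β : ι → R) (w : R) :
    (binomialSum n θ α β).eval w =
      ∑ i, (α i * (1 + θ i * w) ^ n + β i * (n * w * (1 + θ i * w) ^ (n - 1))) := by
  simp [binomialSum, eval_finsetSum]

theorem coeff_binomialSum (n : ℕ) (θ α β : ι → R) (k : ℕ) :
    (binomialSum n θ α β).coeff k = n.choose k * hermiteFunctional θ α β (X ^ k) := by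
  simp only [binomialSum, finsetSum_coeff, coeff_add, coeff_C_mul, coeff_one_add_C_mul_X_pow,
    coeff_C_mul_X_mul_one_add_C_mul_X_pow, hermiteFunctional_apply, eval_pow, eval_X,
    derivative_X_pow, eval_mul, eval_C, mul_sum]
  exact sum_congr rfl fun i _ => by ring

end CommRing

section Field

variable {F ι : Type*} [Field F] [Fintype ι] [DecidableEq ι] {θ : ι → F} (α β : ι → F)

theorem hermiteFunctional_X_sub_C_mul_basis_sq (hθ : Function.Injective θ) (j : ι) :
    hermiteFunctional θ α β ((X - C (θ j)) * Lagrange.basis univ θ j ^ 2) = β j := by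
  have hinj : Set.InjOn θ (univ : Finset ι) := hθ.injOn
  rw [hermiteFunctional_apply, sum_eq_single j]
  · simp [Lagrange.eval_basis_self hinj (mem_univ j)]
  · intro i _ hij
    simp [derivative_mul, derivative_pow, Lagrange.eval_basis_of_ne hij.symm (mem_univ i)]
  · simp

theorem hermiteFunctional_basis_sq (hθ : Function.Injective θ) (j : ι) :
    hermiteFunctional θ α β (Lagrange.basis univ θ j ^ 2) =
      α j + 2 * β j * (derivative (Lagrange.basis univ θ j)).eval (θ j) := by
  have hinj : Set.InjOn θ (univ : Finset ι) := hθ.injOn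
  rw [hermiteFunctional_apply, sum_eq_single j]
  · simp [Lagrange.eval_basis_self hinj (mem_univ j), derivative_pow]
    ring
  · intro i _ hij
    simp [derivative_pow, Lagrange.eval_basis_of_ne hij.symm (mem_univ i)]
  · simp

theorem eq_zero_of_hermiteFunctional_eq_zero (hθ : Function.Injective θ) {n : ℕ}
    (hn : 2 * Fintype.card ι ≤ n + 1)
    (hL : ∀ p : F[X], p.natDegree ≤ n → hermiteFunctional θ α β p = 0) :
    α = 0 ∧ β = 0 := by
  have hdeg : ∀ j, (Lagrange.basis univ θ j ^ 2).natDegree ≤ n - 1 := fun j =>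
    natDegree_pow_le.trans <| by
      rw [Lagrange.natDegree_basis hθ.injOn (mem_univ j), card_univ]; omega
  have hβ : β = 0 := _root_.funext fun j => by
    rw [← hermiteFunctional_X_sub_C_mul_basis_sq α β hθ j]
    refine hL _ (natDegree_mul_le.trans ?_)
    have hdeg_j := hdeg j
    have hcard : 0 < Fintype.card ι := Fintype.card_pos_iff.mpr ⟨j⟩
    rw [natDegree_X_sub_C]; omega
  refine ⟨_root_.funext fun j => ?_, hβ⟩
  have hbasis := hermiteFunctional_basis_sq α β hθ j
  rw [hL _ ((hdeg j).trans (Nat.sub_le n 1)), hβ] at hbasis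
  simpa using hbasis.symm

theorem eq_zero_of_binomialSum_eq_zero [CharZero F] (hθ : Function.Injective θ) {n : ℕ}
    (hn : 2 * Fintype.card ι ≤ n + 1) (h : binomialSum n θ α β = 0) : α = 0 ∧ β = 0 := by
  have hmonomial : ∀ k ≤ n, hermiteFunctional θ α β (X ^ k) = 0 := fun k hk => by
    have hcoeff := coeff_binomialSum n θ α β k
    rw [h, coeff_zero, eq_comm, mul_eq_zero] at hcoeff
    exact hcoeff.resolve_left (Nat.cast_ne_zero.mpr (Nat.choose_pos hk).ne')
  exact eq_zero_of_hermiteFunctional_eq_zero α β hθ hn fun p hp =>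
    map_eq_zero_of_natDegree_le _ hmonomial hp

end Field

end Polynomial

theorem exp_polynomial_vanish_coeffs_zero_general
    (K n : ℕ) (hn : 2 * K - 1 ≤ n)
    (θ : Fin K → ℝ)
    (hθdist : Function.Injective θ)
    (α β : Fin K → ℝ)
    (hvanish : ∀ t : ℝ,
      ∑ i, (α i * (1 - θ i + θ i * Real.exp t) ^ n
        + β i * (n : ℝ) * (Real.exp t - 1) * (1 - θ i + θ i * Real.exp t) ^ (n - 1)) = 0) :
    ∀ i, α i = 0 ∧ β i = 0 := by
  intro i
  have hroots : ∀ t, (binomialSum n θ α β).IsRoot (Real.exp t - 1) := fun t => by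
    rw [IsRoot, eval_binomialSum, ← hvanish t]
    exact sum_congr rfl fun j _ => by ring
  have hzero : binomialSum n θ α β = 0 := eq_zero_of_infinite_isRoot _ <|
    (Set.infinite_range_of_injective (sub_left_injective.comp Real.exp_injective)).mono
      (Set.range_subset_iff.mpr hroots)
  obtain ⟨hα, hβ⟩ := eq_zero_of_binomialSum_eq_zero α β hθdist
    (by rw [Fintype.card_fin]; have := i.pos; omega) hzero
  exact ⟨congrFun hα i, congrFun hβ i⟩

/-- If the combination `∑ᵢ [αᵢ(1−θᵢ+θᵢeᵗ)ⁿ + βᵢ n (eᵗ−1)(1−θᵢ+θᵢeᵗ)^{n−1}]`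
vanishes for all `t ∈ ℝ`, with distinct `θᵢ ∈ (0,1)` and `n ≥ 2K − 1`, then all
coefficients `αᵢ, βᵢ` vanish. -/
theorem exp_polynomial_vanish_coeffs_zero
    (K n : ℕ) (hn : 2 * K - 1 ≤ n)
    (θ : Fin K → ℝ) (hθ01 : ∀ i, θ i ∈ Set.Ioo (0 : ℝ) 1)
    (hθdist : Function.Injective θ)
    (α β : Fin K → ℝ)
    (hvanish : ∀ t : ℝ,
      ∑ i, (α i * (1 - θ i + θ i * Real.exp t) ^ n
        + β i * (n : ℝ) * (Real.exp t - 1) * (1 - θ i + θ i * Real.exp t) ^ (n - 1)) = 0) :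
    ∀ i, α i = 0 ∧ β i = 0 :=
  exp_polynomial_vanish_coeffs_zero_general K n hn θ hθdist α β hvanish
end

section
/- Matching of mixture atoms from small Wasserstein distance: let θ₁,…,θ_K ∈ ℝ^d with pairwise distances at least Δ > 0, let w₀ ∈ Δ_{K-1} have all entries ≥ w_min > 0, and let (θ'₁,…,θ'_K, w') be another configuration. If there exists a coupling q of w' and w₀ (i.e., q_{ij} ≥ 0, ∑_j q_{ij} = w'_i, ∑_i q_{ij} = w₀_j) with ∑_{i,j} q_{ij} ‖θ'_i − θ_j‖₂ ≤ ε where ε < w_min · Δ/2, then there is a permutation σ of {1,…,K} such that ‖θ'_{σ(j)} − θ_j‖₂ ≤ ε/(w₀_j/2) ≤ 2ε/w_min for every j. -/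
/-!
Each true atom `θ j` receives mass `w₀ j` through the coupling, at total cost at most `ε`, so
some perturbed atom sending it mass lies within the average transport distance `ε / w₀ j`, which
is below `Δ / 2`. Since the true atoms are `Δ`-separated, no perturbed atom can be that close to
two of them, so choosing one such atom for each `j` is injective, hence a permutation.
-/

open Finset

theorem exists_le_div_sum_of_sum_mul_le {ι : Type*} {s : Finset ι} {q c : ι → ℝ} {ε : ℝ}
    (hq : ∀ i ∈ s, 0 ≤ q i) (hs : 0 < ∑ i ∈ s, q i) (h : ∑ i ∈ s, q i * c i ≤ ε) :
    ∃ i ∈ s, c i ≤ ε / ∑ i ∈ s, q i := by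
  obtain ⟨i, hi, hmin⟩ := s.exists_min_image c (nonempty_of_sum_ne_zero hs.ne')
  refine ⟨i, hi, (le_div_iff₀ hs).2 ?_⟩
  calc c i * ∑ j ∈ s, q j = ∑ j ∈ s, q j * c i := by rw [mul_comm, sum_mul]
    _ ≤ ∑ j ∈ s, q j * c j :=
      sum_le_sum fun j hj => mul_le_mul_of_nonneg_left (hmin j hj) (hq j hj)
    _ ≤ ε := h

theorem Function.injective_of_dist_lt_half {ι ι' X : Type*} [PseudoMetricSpace X]
    {θ : ι → X} {θ' : ι' → X} {Δ : ℝ}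
    (hsep : ∀ i j, i ≠ j → Δ ≤ dist (θ i) (θ j))
    {f : ι → ι'} (hf : ∀ j, dist (θ' (f j)) (θ j) < Δ / 2) : Function.Injective f := by
  intro j j' hjj'
  by_contra hne
  have htri : dist (θ j) (θ j') ≤ dist (θ' (f j)) (θ j) + dist (θ' (f j')) (θ j') := by
    rw [dist_comm (θ' _), ← hjj']
    exact dist_triangle _ _ _
  linarith [hsep j j' hne, hf j, hf j']

theorem mixture_atom_matching_general
    {d K : ℕ} (θ θ' : Fin K → EuclideanSpace ℝ (Fin d))
    (Δ : ℝ)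
    (hsep : ∀ i j, i ≠ j → Δ ≤ ‖θ i - θ j‖)
    (w₀ : Fin K → ℝ) (wmin : ℝ) (hwmin : 0 < wmin)
    (hw₀ : ∀ j, wmin ≤ w₀ j)
    (q : Fin K → Fin K → ℝ) (hqpos : ∀ i j, 0 ≤ q i j)
    (hcol : ∀ j, ∑ i, q i j = w₀ j)
    (ε : ℝ) (hε : 0 ≤ ε)
    (hcost : ∑ i, ∑ j, q i j * ‖θ' i - θ j‖ ≤ ε)
    (hεsmall : ε < wmin * Δ / 2) :
    ∃ σ : Equiv.Perm (Fin K), ∀ j,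
      ‖θ' (σ j) - θ j‖ ≤ ε / (w₀ j / 2) ∧ ε / (w₀ j / 2) ≤ 2 * ε / wmin := by
  have hw₀pos : ∀ j, 0 < w₀ j := fun j => hwmin.trans_le (hw₀ j)
  have hnear : ∀ j, ∃ i, ‖θ' i - θ j‖ ≤ ε / w₀ j := by
    intro j
    have hcolcost : ∑ i, q i j * ‖θ' i - θ j‖ ≤ ε :=
      (sum_le_sum fun i _ => single_le_sum (f := fun j' => q i j' * ‖θ' i - θ j'‖)
        (fun j' _ => mul_nonneg (hqpos i j') (norm_nonneg _)) (mem_univ j)).trans hcost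
    obtain ⟨i, -, hi⟩ := exists_le_div_sum_of_sum_mul_le (fun i _ => hqpos i j)
      (by rw [hcol]; exact hw₀pos j) hcolcost
    exact ⟨i, by rwa [hcol] at hi⟩
  choose f hf using hnear
  have hf_le_wmin : ∀ j, ‖θ' (f j) - θ j‖ ≤ ε / wmin := fun j =>
    (hf j).trans (div_le_div_of_nonneg_left hε hwmin (hw₀ j))
  have hf_lt_half : ∀ j, dist (θ' (f j)) (θ j) < Δ / 2 := fun j => by
    rw [dist_eq_norm]
    exact (hf_le_wmin j).trans_lt ((div_lt_iff₀' hwmin).2 (by linarith))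
  have hinj := Function.injective_of_dist_lt_half
    (fun i j hij => by simpa only [dist_eq_norm] using hsep i j hij) hf_lt_half
  refine ⟨Equiv.ofBijective f (Finite.injective_iff_bijective.mp hinj), fun j => ⟨?_, ?_⟩⟩
  · exact (hf j).trans
      (div_le_div_of_nonneg_left hε (half_pos (hw₀pos j)) (half_le_self (hw₀pos j).le))
  · rw [div_div_eq_mul_div, mul_comm]
    exact div_le_div_of_nonneg_left (by linarith) hwmin (hw₀ j)

/-- Matching of mixture atoms from small Wasserstein (transport) distance:
if a coupling of the weight vectors transports `w'` to `w₀` with total cost at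
most `ε < w_min Δ/2`, where the true atoms are `Δ`-separated and all true
weights are at least `w_min`, then there is a permutation matching every true
atom to a perturbed atom within `2ε/w₀_j ≤ 2ε/w_min`. -/
theorem mixture_atom_matching
    {d K : ℕ} (θ θ' : Fin K → EuclideanSpace ℝ (Fin d))
    (Δ : ℝ) (hΔ : 0 < Δ)
    (hsep : ∀ i j, i ≠ j → Δ ≤ ‖θ i - θ j‖)
    (w₀ w' : Fin K → ℝ) (wmin : ℝ) (hwmin : 0 < wmin)
    (hw₀ : ∀ j, wmin ≤ w₀ j) (hw₀sum : ∑ j, w₀ j = 1)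
    (hw'pos : ∀ i, 0 ≤ w' i) (hw'sum : ∑ i, w' i = 1)
    (q : Fin K → Fin K → ℝ) (hqpos : ∀ i j, 0 ≤ q i j)
    (hrow : ∀ i, ∑ j, q i j = w' i) (hcol : ∀ j, ∑ i, q i j = w₀ j)
    (ε : ℝ) (hε : 0 ≤ ε)
    (hcost : ∑ i, ∑ j, q i j * ‖θ' i - θ j‖ ≤ ε)
    (hεsmall : ε < wmin * Δ / 2) :
    ∃ σ : Equiv.Perm (Fin K), ∀ j,
      ‖θ' (σ j) - θ j‖ ≤ ε / (w₀ j / 2) ∧ ε / (w₀ j / 2) ≤ 2 * ε / wmin :=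
  mixture_atom_matching_general θ θ' Δ hsep w₀ wmin hwmin hw₀ q hqpos hcol ε hε hcost hεsmall
end

section
/- Weight consistency from atom matching: in the setting of matched mixture atoms, suppose ‖θ'_i − θ_i‖₂ ≤ Cε for all i (identity matching after relabeling), the true atoms have pairwise distances ≥ Δ > 2Cε, and q is a coupling of w' and w₀ with ∑_{i,j} q_{ij}‖θ'_i − θ_j‖₂ ≤ ε. Then |w'_1 − w₀_1| = |∑_{j≥2} q_{1j} − ∑_{i≥2} q_{i1}| ≤ 2ε/(Δ − Cε). -/
open Finset

/-- Weight consistency from atom matching: if the perturbed atoms are matched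
to the true atoms (`‖θ'_i − θ_i‖ ≤ Cε`), the true atoms are `Δ`-separated with
`Δ > 2Cε`, and a coupling `q` of `w'` and `w₀` has transport cost at most `ε`,
then `w'_1 − w₀_1 = ∑_{j≠1} q_{1j} − ∑_{i≠1} q_{i1}` and
`|w'_1 − w₀_1| ≤ 2ε/(Δ − Cε)`. -/
theorem mixture_weight_consistency
    {d K : ℕ} (hK : 0 < K)
    (θ θ' : Fin K → EuclideanSpace ℝ (Fin d))
    (C ε Δ : ℝ) (hC : 0 ≤ C) (hε : 0 ≤ ε)
    (hmatch : ∀ i, ‖θ' i - θ i‖ ≤ C * ε)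
    (hsep : ∀ i j, i ≠ j → Δ ≤ ‖θ i - θ j‖)
    (hΔ : 2 * C * ε < Δ)
    (w₀ w' : Fin K → ℝ)
    (q : Fin K → Fin K → ℝ) (hqpos : ∀ i j, 0 ≤ q i j)
    (hrow : ∀ i, ∑ j, q i j = w' i) (hcol : ∀ j, ∑ i, q i j = w₀ j)
    (hcost : ∑ i, ∑ j, q i j * ‖θ' i - θ j‖ ≤ ε) :
    w' ⟨0, hK⟩ - w₀ ⟨0, hK⟩
        = (∑ j ∈ univ.filter (fun j => j ≠ ⟨0, hK⟩), q ⟨0, hK⟩ j)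
          - ∑ i ∈ univ.filter (fun i => i ≠ ⟨0, hK⟩), q i ⟨0, hK⟩
      ∧ |w' ⟨0, hK⟩ - w₀ ⟨0, hK⟩| ≤ 2 * ε / (Δ - C * ε) := by
  set z : Fin K := ⟨0, hK⟩
  have hCε : 0 ≤ C * ε := mul_nonneg hC hε
  have hpos : 0 < Δ - C * ε := by nlinarith
  -- distance lower bounds
  have hdist : ∀ j, j ≠ z → Δ - C * ε ≤ ‖θ' z - θ j‖ := by
    intro j hj
    have h1 := hsep z j hj.symm
    have h2 := hmatch z
    have : ‖θ z - θ j‖ ≤ ‖θ' z - θ z‖ + ‖θ' z - θ j‖ := by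
      have := norm_sub_le_norm_sub_add_norm_sub (θ z) (θ' z) (θ j)
      calc ‖θ z - θ j‖ ≤ ‖θ z - θ' z‖ + ‖θ' z - θ j‖ := norm_sub_le_norm_sub_add_norm_sub _ _ _
        _ = ‖θ' z - θ z‖ + ‖θ' z - θ j‖ := by rw [norm_sub_rev]
    linarith
  have hdist' : ∀ i, i ≠ z → Δ - C * ε ≤ ‖θ' i - θ z‖ := by
    intro i hi
    have h1 := hsep i z (by exact fun h => hi h)
    have h2 := hmatch i
    have : ‖θ i - θ z‖ ≤ ‖θ i - θ' i‖ + ‖θ' i - θ z‖ :=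
      norm_sub_le_norm_sub_add_norm_sub _ _ _
    rw [norm_sub_rev (θ i) (θ' i)] at this
    linarith
  -- first part
  have hrowz := hrow z
  have hcolz := hcol z
  have hw' : w' z = q z z + ∑ j ∈ univ.filter (fun j => j ≠ z), q z j := by
    rw [← hrowz, ← Finset.sum_filter_add_sum_filter_not univ (fun j => j = z)]
    congr 1
    rw [Finset.filter_eq']
    simp
  have hw₀ : w₀ z = q z z + ∑ i ∈ univ.filter (fun i => i ≠ z), q i z := by
    rw [← hcolz, ← Finset.sum_filter_add_sum_filter_not univ (fun i => i = z)]
    congr 1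
    rw [Finset.filter_eq']
    simp
  have heq : w' z - w₀ z = (∑ j ∈ univ.filter (fun j => j ≠ z), q z j)
      - ∑ i ∈ univ.filter (fun i => i ≠ z), q i z := by
    rw [hw', hw₀]; ring
  refine ⟨heq, ?_⟩
  -- cost bounds
  have hterm_nonneg : ∀ i j, 0 ≤ q i j * ‖θ' i - θ j‖ := fun i j =>
    mul_nonneg (hqpos i j) (norm_nonneg _)
  have hrowcost : ∑ j ∈ univ.filter (fun j => j ≠ z), q z j * ‖θ' z - θ j‖ ≤ ε := by
    calc ∑ j ∈ univ.filter (fun j => j ≠ z), q z j * ‖θ' z - θ j‖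
        ≤ ∑ j, q z j * ‖θ' z - θ j‖ :=
          Finset.sum_le_sum_of_subset_of_nonneg (Finset.filter_subset _ _)
            (fun j _ _ => hterm_nonneg z j)
      _ ≤ ∑ i, ∑ j, q i j * ‖θ' i - θ j‖ :=
          Finset.single_le_sum (f := fun i => ∑ j, q i j * ‖θ' i - θ j‖)
            (fun i _ => Finset.sum_nonneg fun j _ => hterm_nonneg i j) (Finset.mem_univ z)
      _ ≤ ε := hcost
  have hcolcost : ∑ i ∈ univ.filter (fun i => i ≠ z), q i z * ‖θ' i - θ z‖ ≤ ε := by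
    calc ∑ i ∈ univ.filter (fun i => i ≠ z), q i z * ‖θ' i - θ z‖
        ≤ ∑ i, q i z * ‖θ' i - θ z‖ :=
          Finset.sum_le_sum_of_subset_of_nonneg (Finset.filter_subset _ _)
            (fun i _ _ => hterm_nonneg i z)
      _ ≤ ∑ i, ∑ j, q i j * ‖θ' i - θ j‖ :=
          Finset.sum_le_sum fun i _ =>
            Finset.single_le_sum (f := fun j => q i j * ‖θ' i - θ j‖)
              (fun j _ => hterm_nonneg i j) (Finset.mem_univ z)
      _ ≤ ε := hcost
  have hrowbound : ∑ j ∈ univ.filter (fun j => j ≠ z), q z j ≤ ε / (Δ - C * ε) := by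
    rw [le_div_iff₀ hpos]
    calc (∑ j ∈ univ.filter (fun j => j ≠ z), q z j) * (Δ - C * ε)
        = ∑ j ∈ univ.filter (fun j => j ≠ z), q z j * (Δ - C * ε) := by
          rw [Finset.sum_mul]
      _ ≤ ∑ j ∈ univ.filter (fun j => j ≠ z), q z j * ‖θ' z - θ j‖ :=
          Finset.sum_le_sum fun j hj =>
            mul_le_mul_of_nonneg_left (hdist j (Finset.mem_filter.mp hj).2) (hqpos z j)
      _ ≤ ε := hrowcost
  have hcolbound : ∑ i ∈ univ.filter (fun i => i ≠ z), q i z ≤ ε / (Δ - C * ε) := by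
    rw [le_div_iff₀ hpos]
    calc (∑ i ∈ univ.filter (fun i => i ≠ z), q i z) * (Δ - C * ε)
        = ∑ i ∈ univ.filter (fun i => i ≠ z), q i z * (Δ - C * ε) := by
          rw [Finset.sum_mul]
      _ ≤ ∑ i ∈ univ.filter (fun i => i ≠ z), q i z * ‖θ' i - θ z‖ :=
          Finset.sum_le_sum fun i hi =>
            mul_le_mul_of_nonneg_left (hdist' i (Finset.mem_filter.mp hi).2) (hqpos i z)
      _ ≤ ε := hcolcost
  have hrownn : 0 ≤ ∑ j ∈ univ.filter (fun j => j ≠ z), q z j :=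
    Finset.sum_nonneg fun j _ => hqpos z j
  have hcolnn : 0 ≤ ∑ i ∈ univ.filter (fun i => i ≠ z), q i z :=
    Finset.sum_nonneg fun i _ => hqpos i z
  rw [heq, abs_sub_le_iff]
  constructor <;> [skip; skip] <;>
    · have : 2 * ε / (Δ - C * ε) = ε / (Δ - C * ε) + ε / (Δ - C * ε) := by ring
      rw [this]
      linarith
end
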